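/- Let y_i = Σ_j W_{ij}·ReLU(x_j) where {W_{ij}}_j and {x_j}_j are mutually independent, E[W_{ij}] = 0, each x_j is symmetric about 0 with E[x_j²] = v, and Var(W_{ij}) = σ² for all j. Then Var(y_i) = (1/2)·d·σ²·v, where d is the number of input units. -/

import Mathlib

/-!
Write `Y_j = W_j · ReLU(x_j)`. The pairs `(W_j, x_j)` are independent across `j`, so the `Y_j`
are pairwise independent and `Var(Σ Y_j) = Σ Var(Y_j)`. Since `W_j` is centred and independent
of `ReLU(x_j)`, `Var(Y_j) = Var(W_j) · E[ReLU(x_j)²]`. Finally `ReLU(t)² + ReLU(-t)² = t²` and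
`x_j`, `-x_j` have the same law, so `E[ReLU(x_j)²] = E[x_j²] / 2 = v / 2`.
-/

open MeasureTheory ProbabilityTheory

section

variable {Ω : Type*} [MeasurableSpace Ω] {μ : Measure Ω}

lemma max_zero_sq_add_max_neg_zero_sq (a : ℝ) : max a 0 ^ 2 + max (-a) 0 ^ 2 = a ^ 2 := by
  rcases le_total a 0 with h | h
  · rw [max_eq_right h, max_eq_left (neg_nonneg.2 h)]; ring
  · rw [max_eq_left h, max_eq_right (neg_nonpos.2 h)]; ring

lemma integral_max_zero_sq_of_identDistrib_neg {X : Ω → ℝ} (hX : MemLp X 2 μ)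
    (hsym : IdentDistrib X (-X) μ μ) :
    ∫ ω, max (X ω) 0 ^ 2 ∂μ = (∫ ω, X ω ^ 2 ∂μ) / 2 := by
  have hrelu : Measurable fun t : ℝ => max t 0 ^ 2 := by fun_prop
  have hflip : ∫ ω, max (X ω) 0 ^ 2 ∂μ = ∫ ω, max (-X ω) 0 ^ 2 ∂μ :=
    (hsym.comp hrelu).integral_eq
  have hsum :
      ∫ ω, max (X ω) 0 ^ 2 ∂μ + ∫ ω, max (-X ω) 0 ^ 2 ∂μ = ∫ ω, X ω ^ 2 ∂μ := by
    rw [← integral_add hX.pos_part.integrable_sq hX.neg_part.integrable_sq]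
    simp only [max_zero_sq_add_max_neg_zero_sq]
  linarith

lemma ProbabilityTheory.IndepFun.fun_sq {X Y : Ω → ℝ} (hXY : X ⟂ᵢ[μ] Y) :
    (fun ω => X ω ^ 2) ⟂ᵢ[μ] (fun ω => Y ω ^ 2) :=
  hXY.comp (measurable_id.pow_const 2) (measurable_id.pow_const 2)

lemma ProbabilityTheory.IndepFun.memLp_two_mul {X Y : Ω → ℝ} (hXY : X ⟂ᵢ[μ] Y)
    (hX : MemLp X 2 μ) (hY : MemLp Y 2 μ) : MemLp (fun ω => X ω * Y ω) 2 μ := by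
  refine (memLp_two_iff_integrable_sq (f := fun ω => X ω * Y ω) (hX.1.mul hY.1)).2 ?_
  simp only [mul_pow]
  exact hXY.fun_sq.integrable_mul hX.integrable_sq hY.integrable_sq

lemma ProbabilityTheory.IndepFun.variance_mul_of_integral_eq_zero {X Y : Ω → ℝ}
    (hXY : X ⟂ᵢ[μ] Y) (hX : MemLp X 2 μ) (hY : MemLp Y 2 μ) (hX0 : μ[X] = 0) :
    Var[fun ω => X ω * Y ω; μ] = Var[X; μ] * ∫ ω, Y ω ^ 2 ∂μ := by
  have hXY0 : ∫ ω, X ω * Y ω ∂μ = 0 := by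
    rw [hXY.integral_fun_mul_eq_mul_integral hX.1 hY.1, hX0, zero_mul]
  rw [variance_of_integral_eq_zero (X := fun ω => X ω * Y ω) (hX.1.mul hY.1).aemeasurable hXY0,
    variance_of_integral_eq_zero hX.aemeasurable hX0]
  simpa only [mul_pow] using
    hXY.fun_sq.integral_fun_mul_eq_mul_integral hX.integrable_sq.1 hY.integrable_sq.1

lemma ProbabilityTheory.iIndepFun.indepFun_mul_comp_sumElim {ι : Type*} {W x : ι → Ω → ℝ}
    (hind : iIndepFun (Sum.elim W x) μ) (hW : ∀ i, AEMeasurable (W i) μ)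
    (hx : ∀ i, AEMeasurable (x i) μ) {g : ℝ → ℝ} (hg : Measurable g) {i j : ι}
    (hij : i ≠ j) :
    (fun ω => W i ω * g (x i ω)) ⟂ᵢ[μ] (fun ω => W j ω * g (x j ω)) := by
  have hmeas : ∀ k, AEMeasurable (Sum.elim W x k) μ := by
    rintro (k | k)
    exacts [hW k, hx k]
  have hφ : Measurable fun p : ℝ × ℝ => p.1 * g p.2 := by fun_prop
  exact (hind.indepFun_prodMk_prodMk₀ hmeas (.inl i) (.inr i) (.inl j) (.inr j)
    (by simpa using hij) (by simp) (by simp) (by simpa using hij)).comp hφ hφ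

end

/-- For `y_i = Σ_j W_{ij}·ReLU(x_j)` with all `2d` variables mutually independent,
`E[W_{ij}] = 0`, `Var(W_{ij}) = σ²`, each `x_j` symmetric about 0 with `E[x_j²] = v`,
we have `Var(y_i) = (1/2)·d·σ²·v`. -/
theorem stmt_6 {Ω : Type*} [MeasurableSpace Ω] (μ : Measure Ω) [IsProbabilityMeasure μ]
    (d : ℕ) (W x : Fin d → Ω → ℝ) (σ2 v : ℝ)
    (hW : ∀ j, MemLp (W j) 2 μ) (hx : ∀ j, MemLp (x j) 2 μ)
    (hind : iIndepFun (Sum.elim W x) μ)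
    (hEW : ∀ j, ∫ ω, W j ω ∂μ = 0)
    (hVW : ∀ j, variance (W j) μ = σ2)
    (hsym : ∀ j, Measure.map (x j) μ = Measure.map (fun ω => -x j ω) μ)
    (hM2 : ∀ j, ∫ ω, (x j ω) ^ 2 ∂μ = v) :
    variance (fun ω => ∑ j, W j ω * max (x j ω) 0) μ = (1 / 2) * d * σ2 * v := by
  have hrelu : Measurable fun t : ℝ => max t 0 := by fun_prop
  have hWx : ∀ j, W j ⟂ᵢ[μ] fun ω => max (x j ω) 0 := fun j =>
    (hind.indepFun Sum.inl_ne_inr).comp measurable_id hrelu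
  have hvar : ∀ j, Var[fun ω => W j ω * max (x j ω) 0; μ] = σ2 * (v / 2) := fun j => by
    rw [(hWx j).variance_mul_of_integral_eq_zero (hW j) (hx j).pos_part (hEW j), hVW j,
      integral_max_zero_sq_of_identDistrib_neg (hx j)
        ⟨(hx j).aemeasurable, (hx j).aemeasurable.neg, hsym j⟩, hM2 j]
  rw [← Finset.sum_fn,
    IndepFun.variance_sum (fun j _ => (hWx j).memLp_two_mul (hW j) (hx j).pos_part)
      fun i _ j _ hij => hind.indepFun_mul_comp_sumElim (fun k => (hW k).aemeasurable)
        (fun k => (hx k).aemeasurable) hrelu hij]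
  simp only [hvar, Finset.sum_const, Finset.card_univ, Fintype.card_fin, nsmul_eq_mul]
  ring
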